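/- arXiv:2510.08250 — 4 statements merged into one kernel-verified Lean document; each statement's English description precedes it below -/
import Mathlib

section
/- Let S be a 2-dimensional complex vector space. For matrices p ∈ End(S) and q ∈ End(S) with det(q) = 0, every polynomial in the entries of p and q that is invariant under simultaneous conjugation by GL(S) is a polynomial in det(p), Tr(p), Tr(q), and Tr(pq). -/
/-!
A singular `2 × 2` matrix is of the form `q = v wᵀ`. If `v, p v` is a basis, conjugating by the
matrix `g` with these columns takes `p` to its companion matrix `[[0, -det p], [1, tr p]]` and
`q` to `[[tr q, tr pq], [0, 0]]`, so an invariant `f` agrees with the polynomial `Q` in the four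
invariants obtained by evaluating `f` at this normal form. In the coordinates `(p, v, w)` both
`f p (v wᵀ)` and `Q` are polynomials, and they agree off the hypersurface `det g = 0`, hence
everywhere.
-/

namespace MvPolynomial

theorem eq_of_eval_eq_of_eval_ne_zero {R σ : Type*} [CommRing R] [IsDomain R] [Infinite R]
    {F G H : MvPolynomial σ R} (hH : H ≠ 0) (h : ∀ x, eval x H ≠ 0 → eval x F = eval x G) :
    F = G := by
  have hprod : (F - G) * H = 0 := by
    refine MvPolynomial.funext fun x => ?_
    rw [map_mul, map_sub, map_zero]
    by_cases hx : eval x H = 0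
    · rw [hx, mul_zero]
    · rw [h x hx, sub_self, zero_mul]
  exact sub_eq_zero.mp ((mul_eq_zero.mp hprod).resolve_right hH)

theorem eval_bind₁ {R σ τ : Type*} [CommSemiring R] (x : τ → R) (g : σ → MvPolynomial τ R)
    (P : MvPolynomial σ R) : eval x (bind₁ g P) = eval (eval x ∘ g) P :=
  eval₂Hom_bind₁ (RingHom.id R) x g P

end MvPolynomial

open MvPolynomial

namespace Matrix

theorem exists_eq_vecMulVec_of_det_eq_zero {K : Type*} [Field K] {q : Matrix (Fin 2) (Fin 2) K}
    (h : q.det = 0) : ∃ v w : Fin 2 → K, q = vecMulVec v w := by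
  rw [det_fin_two] at h
  by_cases h00 : q 0 0 = 0
  · by_cases h01 : q 0 1 = 0
    · refine ⟨![0, 1], ![q 1 0, q 1 1], ?_⟩
      ext i j; fin_cases i <;> fin_cases j <;> simp [vecMulVec_apply, h00, h01]
    · have h10 : q 1 0 = 0 := by simpa [h00, h01] using h
      refine ⟨![q 0 1, q 1 1], ![0, 1], ?_⟩
      ext i j; fin_cases i <;> fin_cases j <;> simp [vecMulVec_apply, h00, h10]
  · refine ⟨![q 0 0, q 1 0], ![1, q 0 1 / q 0 0], ?_⟩
    ext i j; fin_cases i <;> fin_cases j <;> simp [vecMulVec_apply] <;> field_simp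
    linear_combination h

variable {R S : Type*} [CommRing R] [CommRing S]

def krylovMatrix (p : Matrix (Fin 2) (Fin 2) R) (v : Fin 2 → R) : Matrix (Fin 2) (Fin 2) R :=
  !![v 0, (p *ᵥ v) 0; v 1, (p *ᵥ v) 1]

def pairInvariants (p q : Matrix (Fin 2) (Fin 2) R) : Fin 4 → R :=
  ![p.det, p.trace, q.trace, (p * q).trace]

/-- At `y = pairInvariants p (vecMulVec v w)`, the conjugate of `(p, vecMulVec v w)` by
`krylovMatrix p v`. -/
def pairNormalForm (y : Fin 4 → R) : Matrix (Fin 2) (Fin 2) R × Matrix (Fin 2) (Fin 2) R :=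
  (!![0, -y 0; 1, y 1], !![y 2, y 3; 0, 0])

def pairCoords (p q : Matrix (Fin 2) (Fin 2) R) : (Fin 2 × Fin 2) ⊕ (Fin 2 × Fin 2) → R :=
  Sum.elim (fun ij => p ij.1 ij.2) (fun ij => q ij.1 ij.2)

theorem krylovMatrix_mul_pairNormalForm_fst (p q : Matrix (Fin 2) (Fin 2) R) (v : Fin 2 → R) :
    krylovMatrix p v * (pairNormalForm (pairInvariants p q)).1 = p * krylovMatrix p v := by
  -- the second column is Cayley–Hamilton applied to `v`: `p² v = tr p • p v - det p • v`
  ext i j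
  fin_cases i <;> fin_cases j <;>
    simp [krylovMatrix, pairNormalForm, pairInvariants, mul_apply, mulVec, dotProduct,
      det_fin_two, trace_fin_two] <;> ring

theorem krylovMatrix_mul_pairNormalForm_snd (p : Matrix (Fin 2) (Fin 2) R) (v w : Fin 2 → R) :
    krylovMatrix p v * (pairNormalForm (pairInvariants p (vecMulVec v w))).2 =
      vecMulVec v w * krylovMatrix p v := by
  ext i j
  fin_cases i <;> fin_cases j <;>
    simp [krylovMatrix, pairNormalForm, pairInvariants, mul_apply, mulVec, dotProduct,
      trace_fin_two, vecMulVec_apply] <;> ring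

theorem apply_eq_apply_pairNormalForm {K β : Type*} [Field K]
    {f : Matrix (Fin 2) (Fin 2) K → Matrix (Fin 2) (Fin 2) K → β}
    (hinv : ∀ g : GeneralLinearGroup (Fin 2) K, ∀ p q,
      f ((↑g : Matrix (Fin 2) (Fin 2) K) * p * (↑g⁻¹ : Matrix (Fin 2) (Fin 2) K))
        ((↑g : Matrix (Fin 2) (Fin 2) K) * q * (↑g⁻¹ : Matrix (Fin 2) (Fin 2) K)) = f p q)
    {p : Matrix (Fin 2) (Fin 2) K} {v : Fin 2 → K} (hpv : (krylovMatrix p v).det ≠ 0)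
    (w : Fin 2 → K) :
    f p (vecMulVec v w) = f (pairNormalForm (pairInvariants p (vecMulVec v w))).1
      (pairNormalForm (pairInvariants p (vecMulVec v w))).2 := by
  rw [← hinv (GeneralLinearGroup.mkOfDetNeZero _ hpv) (pairNormalForm _).1]
  congr 1 <;> rw [Units.eq_mul_inv_iff_mul_eq]
  · exact (krylovMatrix_mul_pairNormalForm_fst p _ v).symm
  · exact (krylovMatrix_mul_pairNormalForm_snd p v w).symm

theorem krylovMatrix_map (φ : R →+* S) (p : Matrix (Fin 2) (Fin 2) R) (v : Fin 2 → R) :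
    (krylovMatrix p v).map φ = krylovMatrix (p.map φ) (φ ∘ v) := by
  ext i j
  fin_cases i <;> fin_cases j <;> simp [krylovMatrix]

theorem comp_pairInvariants (φ : R →+* S) (p q : Matrix (Fin 2) (Fin 2) R) :
    φ ∘ pairInvariants p q = pairInvariants (p.map φ) (q.map φ) := by
  ext i
  fin_cases i <;>
    simp [pairInvariants, RingHom.map_det, AddMonoidHom.map_trace, Matrix.map_mul]

theorem comp_pairCoords (φ : R →+* S) (p q : Matrix (Fin 2) (Fin 2) R) :
    φ ∘ pairCoords p q = pairCoords (p.map φ) (q.map φ) := by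
  ext (_ | _) <;> rfl

theorem vecMulVec_map {m n : Type*} (φ : R →+* S) (v : m → R) (w : n → R) :
    (vecMulVec v w).map φ = vecMulVec (φ ∘ v) (φ ∘ w) := by
  ext i j
  simp [vecMulVec_apply]

end Matrix

open Matrix

theorem eval_bind₁_pairCoords_pairNormalForm {R : Type*} [CommRing R]
    (P : MvPolynomial ((Fin 2 × Fin 2) ⊕ (Fin 2 × Fin 2)) R) (y : Fin 4 → R) :
    eval y (bind₁ (pairCoords (pairNormalForm X).1 (pairNormalForm X).2) P) =
      eval (pairCoords (pairNormalForm y).1 (pairNormalForm y).2) P := by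
  rw [eval_bind₁]
  refine congrArg (fun x => eval x P) (funext fun x => ?_)
  rcases x with ⟨i, j⟩ | ⟨i, j⟩ <;> fin_cases i <;> fin_cases j <;>
    simp [pairCoords, pairNormalForm]

section GenericTriple

variable {K : Type*}

/-- Triples `(p, v, w)` parametrize the pairs `(p, v wᵀ)` with singular second entry. -/
abbrev TripleIndex : Type := (Fin 2 × Fin 2) ⊕ (Fin 2 ⊕ Fin 2)

def tripleCoords (p : Matrix (Fin 2) (Fin 2) K) (v w : Fin 2 → K) : TripleIndex → K :=
  Sum.elim (fun ij => p ij.1 ij.2) (Sum.elim v w)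

theorem exists_eq_tripleCoords (x : TripleIndex → K) : ∃ p v w, x = tripleCoords p v w :=
  ⟨of fun i j => x (.inl (i, j)), fun i => x (.inr (.inl i)), fun i => x (.inr (.inr i)),
    by ext (_ | _ | _) <;> rfl⟩

variable [CommRing K]

variable (K) in
noncomputable def genericP : Matrix (Fin 2) (Fin 2) (MvPolynomial TripleIndex K) :=
  of fun i j => X (.inl (i, j))

variable (K) in
noncomputable def genericV : Fin 2 → MvPolynomial TripleIndex K := fun i => X (.inr (.inl i))

variable (K) in
noncomputable def genericW : Fin 2 → MvPolynomial TripleIndex K := fun i => X (.inr (.inr i))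

variable (p : Matrix (Fin 2) (Fin 2) K) (v w : Fin 2 → K)

theorem genericP_map_eval : (genericP K).map (eval (tripleCoords p v w)) = p := by
  ext; simp [genericP, tripleCoords]

theorem eval_comp_genericV : eval (tripleCoords p v w) ∘ genericV K = v := by
  ext; simp [genericV, tripleCoords]

theorem eval_comp_genericW : eval (tripleCoords p v w) ∘ genericW K = w := by
  ext; simp [genericW, tripleCoords]

theorem eval_det_krylovMatrix_generic :
    eval (tripleCoords p v w) (krylovMatrix (genericP K) (genericV K)).det =
      (krylovMatrix p v).det := by
  rw [RingHom.map_det, RingHom.mapMatrix_apply, krylovMatrix_map, genericP_map_eval,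
    eval_comp_genericV]

theorem eval_bind₁_pairCoords_generic (P : MvPolynomial ((Fin 2 × Fin 2) ⊕ (Fin 2 × Fin 2)) K) :
    eval (tripleCoords p v w)
        (bind₁ (pairCoords (genericP K) (vecMulVec (genericV K) (genericW K))) P) =
      eval (pairCoords p (vecMulVec v w)) P := by
  rw [eval_bind₁, comp_pairCoords, vecMulVec_map, genericP_map_eval, eval_comp_genericV,
    eval_comp_genericW]

theorem eval_bind₁_pairInvariants_generic (Q : MvPolynomial (Fin 4) K) :
    eval (tripleCoords p v w)
        (bind₁ (pairInvariants (genericP K) (vecMulVec (genericV K) (genericW K))) Q) =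
      eval (pairInvariants p (vecMulVec v w)) Q := by
  rw [eval_bind₁, comp_pairInvariants, vecMulVec_map, genericP_map_eval, eval_comp_genericV,
    eval_comp_genericW]

variable (K) in
theorem det_krylovMatrix_generic_ne_zero [Nontrivial K] :
    (krylovMatrix (genericP K) (genericV K)).det ≠ 0 := fun h0 => by
  have h1 := eval_det_krylovMatrix_generic !![0, 0; 1, 0] ![1, 0] (0 : Fin 2 → K)
  rw [h0, map_zero] at h1
  simp [krylovMatrix, det_fin_two] at h1

end GenericTriple

theorem eval_pairCoords_vecMulVec_of_det_krylovMatrix_ne_zero {K : Type*} [CommRing K]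
    [IsDomain K] [Infinite K]
    {P : MvPolynomial ((Fin 2 × Fin 2) ⊕ (Fin 2 × Fin 2)) K} {Q : MvPolynomial (Fin 4) K}
    (h : ∀ p v w, (krylovMatrix p v).det ≠ 0 →
      eval (pairCoords p (vecMulVec v w)) P = eval (pairInvariants p (vecMulVec v w)) Q)
    (p : Matrix (Fin 2) (Fin 2) K) (v w : Fin 2 → K) :
    eval (pairCoords p (vecMulVec v w)) P = eval (pairInvariants p (vecMulVec v w)) Q := by
  have hPQ : bind₁ (pairCoords (genericP K) (vecMulVec (genericV K) (genericW K))) P =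
      bind₁ (pairInvariants (genericP K) (vecMulVec (genericV K) (genericW K))) Q := by
    refine eq_of_eval_eq_of_eval_ne_zero (det_krylovMatrix_generic_ne_zero K) fun x hx => ?_
    obtain ⟨p, v, w, rfl⟩ := exists_eq_tripleCoords x
    rw [eval_det_krylovMatrix_generic] at hx
    rw [eval_bind₁_pairCoords_generic, eval_bind₁_pairInvariants_generic]
    exact h p v w hx
  simpa only [eval_bind₁_pairCoords_generic, eval_bind₁_pairInvariants_generic] using
    congrArg (eval (tripleCoords p v w)) hPQ

/-- For 2×2 complex matrices `p`, `q`, every polynomial function of the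
entries of `(p, q)` invariant under simultaneous conjugation by `GL₂(ℂ)` is, on the
locus `det q = 0`, a polynomial in `det p`, `Tr p`, `Tr q` and `Tr (p*q)`. -/
theorem stmt0
    (f : Matrix (Fin 2) (Fin 2) ℂ → Matrix (Fin 2) (Fin 2) ℂ → ℂ)
    (hpoly : ∃ P : MvPolynomial ((Fin 2 × Fin 2) ⊕ (Fin 2 × Fin 2)) ℂ,
      ∀ p q, f p q =
        MvPolynomial.eval (Sum.elim (fun ij => p ij.1 ij.2) (fun ij => q ij.1 ij.2)) P)
    (hinv : ∀ g : Matrix.GeneralLinearGroup (Fin 2) ℂ, ∀ p q,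
      f ((↑g : Matrix (Fin 2) (Fin 2) ℂ) * p * (↑g⁻¹ : Matrix (Fin 2) (Fin 2) ℂ))
        ((↑g : Matrix (Fin 2) (Fin 2) ℂ) * q * (↑g⁻¹ : Matrix (Fin 2) (Fin 2) ℂ)) = f p q) :
    ∃ Q : MvPolynomial (Fin 4) ℂ, ∀ p q : Matrix (Fin 2) (Fin 2) ℂ, q.det = 0 →
      f p q = MvPolynomial.eval ![p.det, p.trace, q.trace, (p * q).trace] Q := by
  obtain ⟨P, hP⟩ := hpoly
  replace hP : ∀ p q, f p q = eval (pairCoords p q) P := hP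
  let Q := bind₁ (pairCoords (pairNormalForm X).1 (pairNormalForm X).2) P
  have generic : ∀ p v w, (krylovMatrix p v).det ≠ 0 →
      eval (pairCoords p (vecMulVec v w)) P = eval (pairInvariants p (vecMulVec v w)) Q := by
    intro p v w hpv
    rw [← hP, apply_eq_apply_pairNormalForm hinv hpv, hP, eval_bind₁_pairCoords_pairNormalForm]
  refine ⟨Q, fun p q hq => ?_⟩
  obtain ⟨v, w, rfl⟩ := exists_eq_vecMulVec_of_det_eq_zero hq
  rw [hP]
  exact eval_pairCoords_vecMulVec_of_det_krylovMatrix_ne_zero generic p v w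
end

section
/- Let S₁, S₂ be 2-dimensional complex vector spaces. Under a suitable (sign-correct) identification of End₀(S₁) ⊕ End₀(S₂) with Λ²Hom(S₂,S₁) twisted by (det S₁)⁻¹(det S₂), the locus {(p₁, p₂, a) : a p₂ = p₁ a and det(p₁) = det(p₂)} in (End₀(S₁) ⊕ End₀(S₂)) × Hom(S₂,S₁) corresponds to the locus {(p, a) ∈ Λ²H × H : p ∧ p = 0 and p ∧ a = 0} where H = Hom(S₂,S₁). -/
open ExteriorAlgebra

/-- Traceless 2×2 complex matrices, modelling `End₀(Sᵢ)`. -/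
noncomputable def sl2C : Submodule ℂ (Matrix (Fin 2) (Fin 2) ℂ) :=
  LinearMap.ker (Matrix.traceLinearMap (Fin 2) ℂ ℂ)

/-!
Let `E₀, E₁, E₂, E₃` be the matrix units of `H`, row by row. The traceless pair
`(p₁, p₂)` is sent to the bivector `p = Σ cᵢⱼ Eᵢ ∧ Eⱼ` whose coefficients are read off from the
symmetric matrices `p₁ε` and `εp₂`, where `ε = !![0, 1; -1, 0]`. Then `p ∧ p` is the Plücker quadric
`2 (c₀₁c₂₃ - c₀₂c₁₃ + c₀₃c₁₂) = 2 (det p₁ - det p₂)` times `E₀ ∧ E₁ ∧ E₂ ∧ E₃`, and the four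
coordinates of `p ∧ a` in the basis `Eᵢ ∧ Eⱼ ∧ Eₖ` of `Λ³H` are, up to sign, the entries of
`a p₂ - p₁ a`. Wedges of distinct basis vectors are linearly independent, which gives both
equivalences. The map is injective because a traceless pair with `a p₂ = p₁ a` for every `a`
vanishes, hence bijective since both sides have dimension `6`.
-/

open Module

namespace ExteriorAlgebra

variable {R M : Type*} [CommRing R] [AddCommGroup M] [Module R M]

theorem ι_mul_ι_mem_exteriorPower_two (x y : M) : ι R x * ι R y ∈ ⋀[R]^2 M := by
  simpa [ιMulti_apply, Matrix.vecTail] using ιMulti_range R 2 (Set.mem_range_self ![x, y])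

theorem ιMulti_fin_four (v : Fin 4 → M) :
    ιMulti R 4 v = ι R (v 0) * (ι R (v 1) * (ι R (v 2) * ι R (v 3))) := by
  simp [ιMulti_apply, Matrix.vecTail]

theorem ι_mul_ι_mul_self (x : M) (t : ExteriorAlgebra R M) : ι R x * (ι R x * t) = 0 := by
  rw [← mul_assoc, ι_sq_zero, zero_mul]

/- The hypothesis `j < i` orients these rewrites: together with `ι_sq_zero` and
`ι_mul_ι_mul_self`, `simp (disch := decide)` sorts right-associated monomials in a family
indexed by `Fin n` into increasing order. -/
theorem ι_mul_ι_of_lt {I : Type*} [LinearOrder I] (v : I → M) {i j : I} (_ : j < i) :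
    ι R (v i) * ι R (v j) = -(ι R (v j) * ι R (v i)) :=
  eq_neg_of_add_eq_zero_left (ι_add_mul_swap _ _)

theorem ι_mul_ι_mul_of_lt {I : Type*} [LinearOrder I] (v : I → M) {i j : I} (h : j < i)
    (t : ExteriorAlgebra R M) : ι R (v i) * (ι R (v j) * t) = -(ι R (v j) * (ι R (v i) * t)) := by
  rw [← mul_assoc, ι_mul_ι_of_lt v h, neg_mul, mul_assoc]

theorem eq_zero_of_smul_ιMulti_basis_eq_zero {n : ℕ} (b : Basis (Fin n) R M) {c : R}
    (h : c • ιMulti R n b = 0) : c = 0 := by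
  have h' : c • exteriorPower.ιMulti R n b = 0 := Subtype.ext h
  simpa [Basis.det_self] using congrArg (exteriorPower.alternatingMapLinearEquiv b.det) h'

theorem eq_zero_of_smul_ι_basis_triples (b : Basis (Fin 4) R M) {c₀ c₁ c₂ c₃ : R}
    (h : c₀ • (ι R (b 1) * (ι R (b 2) * ι R (b 3))) + c₁ • (ι R (b 0) * (ι R (b 2) * ι R (b 3))) +
      c₂ • (ι R (b 0) * (ι R (b 1) * ι R (b 3))) + c₃ • (ι R (b 0) * (ι R (b 1) * ι R (b 2))) = 0) :
    c₀ = 0 ∧ c₁ = 0 ∧ c₂ = 0 ∧ c₃ = 0 := by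
  -- right multiplication by `ι R (b k)` kills every term except the one without `b k`
  have h₀ := congrArg (· * ι R (b 0)) h
  have h₁ := congrArg (· * ι R (b 1)) h
  have h₂ := congrArg (· * ι R (b 2)) h
  have h₃ := congrArg (· * ι R (b 3)) h
  simp (disch := decide) only [add_mul, smul_mul_assoc, mul_assoc, ι_mul_ι_mul_of_lt b,
    ι_mul_ι_of_lt b, ι_mul_ι_mul_self, ι_sq_zero, mul_neg, neg_neg, smul_zero, mul_zero, zero_mul,
    add_zero, zero_add, smul_neg, neg_zero, neg_eq_zero, ← ιMulti_fin_four] at h₀ h₁ h₂ h₃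
  exact ⟨eq_zero_of_smul_ιMulti_basis_eq_zero b h₀, eq_zero_of_smul_ιMulti_basis_eq_zero b h₁,
    eq_zero_of_smul_ιMulti_basis_eq_zero b h₂, eq_zero_of_smul_ιMulti_basis_eq_zero b h₃⟩

end ExteriorAlgebra

namespace Matrix

variable {R : Type*} [CommRing R]

def finTwoCoords : Matrix (Fin 2) (Fin 2) R ≃ₗ[R] (Fin 4 → R) where
  toFun m := ![m 0 0, m 0 1, m 1 0, m 1 1]
  invFun v := !![v 0, v 1; v 2, v 3]
  map_add' _ _ := by funext i; fin_cases i <;> simp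
  map_smul' _ _ := by funext i; fin_cases i <;> simp
  left_inv m := by ext i j; fin_cases i <;> fin_cases j <;> simp
  right_inv v := by funext i; fin_cases i <;> simp

noncomputable def finTwoBasis : Basis (Fin 4) R (Matrix (Fin 2) (Fin 2) R) :=
  .ofEquivFun finTwoCoords

theorem eq_sum_finTwoBasis (a : Matrix (Fin 2) (Fin 2) R) :
    a = a 0 0 • finTwoBasis 0 + a 0 1 • finTwoBasis 1 + a 1 0 • finTwoBasis 2 +
      a 1 1 • finTwoBasis 3 := by
  conv_lhs => rw [← finTwoBasis.sum_repr a]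
  simp [Fin.sum_univ_four, finTwoBasis, finTwoCoords]

theorem eq_zero_of_forall_mul_eq_mul [IsDomain R] [NeZero (2 : R)]
    {p₁ p₂ : Matrix (Fin 2) (Fin 2) R} (h₁ : p₁.trace = 0) (h : ∀ a, a * p₂ = p₁ * a) :
    p₁ = 0 ∧ p₂ = 0 := by
  obtain rfl : p₂ = p₁ := by simpa using h 1
  obtain ⟨c, rfl⟩ : p₂ ∈ Set.range (scalar (Fin 2)) :=
    mem_range_scalar_of_commute_single fun _ _ _ ↦ h _
  have hc : c = 0 := by simpa [trace_fin_two, ← two_mul, two_ne_zero] using h₁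
  simp [hc]

local notation "E" k => ι R (finTwoBasis (R := R) k)

/- With the matrix units `Eᵢⱼ = finTwoBasis (2 i + j)` and `ε = !![0, 1; -1, 0]`, this is
`Σ (ε p₂)ₐᵦ E₀ₐ ∧ E₁ᵦ - Σ (p₁ ε)ₐᵦ Eₐ₀ ∧ Eᵦ₁`: for traceless `pᵢ` the matrices `p₁ ε` and `ε p₂`
are symmetric, i.e. lie in `S² S₁` and `S² S₂*`, and are wedged against the volume forms. -/
noncomputable def toBivector : (Matrix (Fin 2) (Fin 2) R × Matrix (Fin 2) (Fin 2) R) →ₗ[R]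
    ExteriorAlgebra R (Matrix (Fin 2) (Fin 2) R) where
  toFun p := p.1 0 1 • ((E 0) * (E 1)) + p.2 1 0 • ((E 0) * (E 2)) +
    (p.2 1 1 - p.1 0 0) • ((E 0) * (E 3)) - (p.1 1 1 + p.2 0 0) • ((E 1) * (E 2)) -
    p.2 0 1 • ((E 1) * (E 3)) - p.1 1 0 • ((E 2) * (E 3))
  map_add' p q := by
    simp only [Prod.fst_add, Prod.snd_add, add_apply]
    module
  map_smul' c p := by
    simp only [Prod.smul_fst, Prod.smul_snd, smul_apply, smul_eq_mul, RingHom.id_apply]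
    module

theorem toBivector_mem_exteriorPower_two (p : Matrix (Fin 2) (Fin 2) R × Matrix (Fin 2) (Fin 2) R) :
    toBivector p ∈ ⋀[R]^2 (Matrix (Fin 2) (Fin 2) R) := by
  simp only [toBivector, LinearMap.coe_mk, AddHom.coe_mk]
  refine Submodule.sub_mem _ (Submodule.sub_mem _ (Submodule.sub_mem _ (Submodule.add_mem _
    (Submodule.add_mem _ ?_ ?_) ?_) ?_) ?_) ?_ <;>
  exact Submodule.smul_mem _ _ (ι_mul_ι_mem_exteriorPower_two _ _)

variable {p₁ p₂ : Matrix (Fin 2) (Fin 2) R}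

theorem toBivector_mul_self (h₁ : p₁.trace = 0) (h₂ : p₂.trace = 0) :
    toBivector (p₁, p₂) * toBivector (p₁, p₂) =
      (2 * (p₁.det - p₂.det)) • ιMulti R 4 finTwoBasis := by
  rw [trace_fin_two, add_eq_zero_iff_eq_neg'] at h₁ h₂
  simp only [toBivector, LinearMap.coe_mk, AddHom.coe_mk, ιMulti_fin_four, det_fin_two, h₁, h₂]
  simp only [sub_eq_add_neg, ← neg_smul, mul_add, add_mul, smul_mul_assoc, mul_smul_comm,
    mul_assoc]
  simp (disch := decide) only [ι_mul_ι_mul_of_lt finTwoBasis, ι_mul_ι_of_lt finTwoBasis,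
    ι_mul_ι_mul_self, ι_sq_zero, mul_neg, neg_neg, smul_zero, mul_zero]
  module

theorem toBivector_mul_ι (h₁ : p₁.trace = 0) (h₂ : p₂.trace = 0) (a : Matrix (Fin 2) (Fin 2) R) :
    toBivector (p₁, p₂) * ι R a =
      (a * p₂ - p₁ * a) 1 1 • ((E 1) * ((E 2) * (E 3))) +
      (a * p₂ - p₁ * a) 1 0 • ((E 0) * ((E 2) * (E 3))) +
      (-(a * p₂ - p₁ * a) 0 1) • ((E 0) * ((E 1) * (E 3))) +
      (-(a * p₂ - p₁ * a) 0 0) • ((E 0) * ((E 1) * (E 2))) := by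
  rw [trace_fin_two, add_eq_zero_iff_eq_neg'] at h₁ h₂
  conv_lhs => rw [eq_sum_finTwoBasis a]
  simp only [toBivector, LinearMap.coe_mk, AddHom.coe_mk, sub_apply, mul_apply, Fin.sum_univ_two,
    h₁, h₂, map_add, map_smul]
  simp only [sub_eq_add_neg, ← neg_smul, mul_add, add_mul, smul_mul_assoc, mul_smul_comm,
    mul_assoc]
  simp (disch := decide) only [ι_mul_ι_mul_of_lt finTwoBasis, ι_mul_ι_of_lt finTwoBasis,
    ι_mul_ι_mul_self, ι_sq_zero, mul_neg, neg_neg, smul_zero, mul_zero]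
  module

theorem toBivector_mul_ι_eq_zero_iff (h₁ : p₁.trace = 0) (h₂ : p₂.trace = 0)
    (a : Matrix (Fin 2) (Fin 2) R) : toBivector (p₁, p₂) * ι R a = 0 ↔ a * p₂ = p₁ * a := by
  rw [toBivector_mul_ι h₁ h₂]
  refine ⟨fun h ↦ ?_, fun h ↦ by
    simp only [h, sub_self, zero_apply, neg_zero, zero_smul, add_zero]⟩
  obtain ⟨h₁₁, h₁₀, h₀₁, h₀₀⟩ :=
    eq_zero_of_smul_ι_basis_triples (M := Matrix (Fin 2) (Fin 2) R) finTwoBasis h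
  rw [neg_eq_zero] at h₀₁ h₀₀
  rw [← sub_eq_zero]
  ext i j
  fin_cases i <;> fin_cases j
  exacts [h₀₀, h₀₁, h₁₀, h₁₁]

theorem toBivector_mul_self_eq_zero_iff [IsDomain R] [NeZero (2 : R)] (h₁ : p₁.trace = 0)
    (h₂ : p₂.trace = 0) : toBivector (p₁, p₂) * toBivector (p₁, p₂) = 0 ↔ p₁.det = p₂.det := by
  rw [toBivector_mul_self h₁ h₂]
  refine ⟨fun h ↦ ?_, fun h ↦ by simp [h]⟩
  simpa [sub_eq_zero, two_ne_zero] using eq_zero_of_smul_ιMulti_basis_eq_zero _ h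

end Matrix

theorem finrank_sl2C : finrank ℂ sl2C = 3 := by
  have htrace : Function.Surjective (Matrix.traceLinearMap (Fin 2) ℂ ℂ) :=
    fun c ↦ ⟨Matrix.single 0 0 c, by simp⟩
  have := LinearMap.finrank_range_add_finrank_ker (Matrix.traceLinearMap (Fin 2) ℂ ℂ)
  rw [LinearMap.range_eq_top.mpr htrace, finrank_top, finrank_matrix, finrank_self] at this
  simp only [Fintype.card_fin] at this
  unfold sl2C
  omega

theorem finrank_sl2C_prod_eq_finrank_exteriorPower_two :
    finrank ℂ (sl2C × sl2C) = finrank ℂ (⋀[ℂ]^2 (Matrix (Fin 2) (Fin 2) ℂ)) := by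
  simp only [finrank_prod, finrank_sl2C, exteriorPower.finrank_eq, finrank_matrix,
    Fintype.card_fin, finrank_self]
  rfl

noncomputable def sl2PairToBivector : (sl2C × sl2C) →ₗ[ℂ] ⋀[ℂ]^2 (Matrix (Fin 2) (Fin 2) ℂ) :=
  (Matrix.toBivector ∘ₗ sl2C.subtype.prodMap sl2C.subtype).codRestrict _
    fun _ ↦ Matrix.toBivector_mem_exteriorPower_two _

theorem coe_sl2PairToBivector (p₁ p₂ : sl2C) :
    (sl2PairToBivector (p₁, p₂) : ExteriorAlgebra ℂ (Matrix (Fin 2) (Fin 2) ℂ)) =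
      Matrix.toBivector ((p₁ : Matrix (Fin 2) (Fin 2) ℂ), (p₂ : Matrix (Fin 2) (Fin 2) ℂ)) :=
  rfl

theorem sl2PairToBivector_injective : Function.Injective sl2PairToBivector := by
  rw [← LinearMap.ker_eq_bot, LinearMap.ker_eq_bot']
  rintro ⟨p₁, p₂⟩ hp
  have hzero := congrArg Subtype.val hp
  rw [coe_sl2PairToBivector] at hzero
  obtain ⟨hp₁, hp₂⟩ := Matrix.eq_zero_of_forall_mul_eq_mul p₁.2 fun a ↦
    (Matrix.toBivector_mul_ι_eq_zero_iff p₁.2 p₂.2 a).mp <| by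
      rw [hzero, ZeroMemClass.coe_zero, zero_mul]
  exact Prod.ext (Subtype.ext hp₁) (Subtype.ext hp₂)

/-- With `H = Hom(S₂,S₁)` (modelled by 2×2 matrices), under a suitable
linear identification `e` of `End₀(S₁) ⊕ End₀(S₂)` with `Λ²H`, the locus
`{(p₁,p₂,a) : a p₂ = p₁ a, det p₁ = det p₂}` corresponds to the locus
`{(p,a) : p ∧ p = 0, p ∧ a = 0}` in `Λ²H × H`. -/
theorem stmt3 :
    ∃ e : (sl2C × sl2C) ≃ₗ[ℂ] (⋀[ℂ]^2 (Matrix (Fin 2) (Fin 2) ℂ) :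
        Submodule ℂ (ExteriorAlgebra ℂ (Matrix (Fin 2) (Fin 2) ℂ))),
      ∀ (p₁ p₂ : sl2C) (a : Matrix (Fin 2) (Fin 2) ℂ),
        ((a * (p₂ : Matrix (Fin 2) (Fin 2) ℂ) = (p₁ : Matrix (Fin 2) (Fin 2) ℂ) * a) ∧
          (p₁ : Matrix (Fin 2) (Fin 2) ℂ).det = (p₂ : Matrix (Fin 2) (Fin 2) ℂ).det)
        ↔
        ((e (p₁, p₂) : ExteriorAlgebra ℂ (Matrix (Fin 2) (Fin 2) ℂ)) *
            (e (p₁, p₂) : ExteriorAlgebra ℂ (Matrix (Fin 2) (Fin 2) ℂ)) = 0 ∧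
          (e (p₁, p₂) : ExteriorAlgebra ℂ (Matrix (Fin 2) (Fin 2) ℂ)) * ι ℂ a = 0) := by
  refine ⟨LinearMap.linearEquivOfInjective _ sl2PairToBivector_injective
    finrank_sl2C_prod_eq_finrank_exteriorPower_two, fun p₁ p₂ a ↦ ?_⟩
  rw [LinearMap.linearEquivOfInjective_apply, coe_sl2PairToBivector,
    Matrix.toBivector_mul_self_eq_zero_iff p₁.2 p₂.2,
    Matrix.toBivector_mul_ι_eq_zero_iff p₁.2 p₂.2, and_comm]
end

section
/- Let S, V be complex vector spaces with dim S = 2, dim V = n > 2. On the total space E₊ of the bundle Hom(V,S) ⊕ End(S) over Gr(2,V) (with tautological subbundle S), the function W = Tr(p ∘ y ∘ x), where x is the tautological inclusion S ↪ V, has critical locus contained in the zero locus {y ∘ x = 0}, which is isomorphic to the cotangent bundle T*Gr(2,V) = Hom(V/S, S) over Gr(2,V). -/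
attribute [local instance] Matrix.normedAddCommGroup Matrix.normedSpace

/-!
Only the `p`-direction of the derivative is needed: `W` is linear in `p`, with
`∂W/∂p (q) = Tr(q ∘ (y ∘ x))`, and the trace pairing is nondegenerate, so a critical point
has `y ∘ x = 0`. The maps `y` with `y ∘ x = 0` are exactly those factoring through
`V ⧸ im x`, which is the left exactness of `Hom(-, S)` applied to `S → V → V ⧸ im x → 0`.
-/

section Differentiable

variable {𝕜 E : Type*} [NontriviallyNormedField 𝕜] [NormedAddCommGroup E] [NormedSpace 𝕜 E]
  {l m n : Type*}

@[fun_prop]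
theorem Differentiable.matrix_mul [Fintype l] [Fintype m] [Fintype n] {f : E → Matrix l m 𝕜}
    {g : E → Matrix m n 𝕜} (hf : Differentiable 𝕜 f) (hg : Differentiable 𝕜 g) :
    Differentiable 𝕜 fun z => f z * g z := by
  refine differentiable_pi.2 fun i => differentiable_pi.2 fun j => ?_
  simp only [Matrix.mul_apply]
  exact Differentiable.fun_sum fun k _ =>
    (differentiable_pi.1 (differentiable_pi.1 hf i) k).mul
      (differentiable_pi.1 (differentiable_pi.1 hg k) j)

@[fun_prop]
theorem Differentiable.matrix_trace [Fintype n] {f : E → Matrix n n 𝕜} (hf : Differentiable 𝕜 f) :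
    Differentiable 𝕜 fun z => (f z).trace := by
  unfold Matrix.trace Matrix.diag
  exact Differentiable.fun_sum fun i _ => differentiable_pi.1 (differentiable_pi.1 hf i) i

end Differentiable

namespace Matrix

section Calculus

variable {𝕜 : Type*} [NontriviallyNormedField 𝕜] {l m n : Type*} [Fintype l] [Fintype m]
  [Fintype n]

def potential (t : Matrix n l 𝕜 × Matrix m n 𝕜 × Matrix l m 𝕜) : 𝕜 :=
  (t.2.2 * t.2.1 * t.1).trace

theorem differentiable_potential :
    Differentiable 𝕜 (potential : Matrix n l 𝕜 × Matrix m n 𝕜 × Matrix l m 𝕜 → 𝕜) := by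
  unfold potential
  fun_prop

theorem fderiv_potential_apply_zero_zero (x : Matrix n l 𝕜) (y : Matrix m n 𝕜)
    (p q : Matrix l m 𝕜) :
    fderiv 𝕜 potential (x, y, p) (0, 0, q) = (q * (y * x)).trace := by
  have hline : HasLineDerivAt 𝕜 potential ((q * (y * x)).trace) (x, y, p) (0, 0, q) := by
    have hW : (fun t : 𝕜 => potential ((x, y, p) + t • (0, 0, q))) =
        fun t => (p * y * x).trace + t * (q * (y * x)).trace := by
      funext t
      simp [potential, Matrix.add_mul, Matrix.mul_assoc, trace_add, trace_smul]
    unfold HasLineDerivAt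
    rw [hW]
    simpa using ((hasDerivAt_id (0 : 𝕜)).mul_const ((q * (y * x)).trace)).const_add
      ((p * y * x).trace)
  exact ((differentiable_potential _).hasFDerivAt.hasLineDerivAt _).lineDeriv.symm.trans
    hline.lineDeriv

theorem mul_eq_zero_of_fderiv_potential_eq_zero {x : Matrix n l 𝕜} {y : Matrix m n 𝕜}
    {p : Matrix l m 𝕜} (hcrit : fderiv 𝕜 potential (x, y, p) = 0) : y * x = 0 :=
  ext_iff_trace_mul_left.2 fun q => by
    simp [← fderiv_potential_apply_zero_zero x y p q, hcrit]

end Calculus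

section Algebra

variable {K : Type*} [CommRing K] {m n s : Type*} [Fintype n] [DecidableEq n] [Fintype s]

def homQuotRangeToMatrix (x : Matrix n s K) :
    (((n → K) ⧸ LinearMap.range x.mulVecLin) →ₗ[K] (m → K)) →ₗ[K] Matrix m n K :=
  LinearMap.toMatrix'.toLinearMap ∘ₗ (LinearMap.range x.mulVecLin).mkQ.lcomp K (m → K)

theorem homQuotRangeToMatrix_injective (x : Matrix n s K) :
    Function.Injective (homQuotRangeToMatrix (m := m) x) :=
  LinearMap.toMatrix'.injective.comp <|
    LinearMap.lcomp_injective_of_surjective _ (Submodule.mkQ_surjective _)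

theorem mul_eq_zero_iff_mem_range_homQuotRangeToMatrix (x : Matrix n s K) (y : Matrix m n K) :
    y * x = 0 ↔ y ∈ Set.range (homQuotRangeToMatrix x) := by
  have hexact := LinearMap.exact_lcomp_of_exact_of_surjective (m → K)
    x.mulVecLin.exact_map_mkQ_range (Submodule.mkQ_surjective _)
  classical
  rw [← toLin'.injective.eq_iff, map_zero, toLin'_mul, toLin'_apply' x,
    ← LinearMap.lcomp_apply' (S := K), hexact]
  simp [homQuotRangeToMatrix, ← LinearMap.toMatrix'.symm.injective.eq_iff]

end Algebra

end Matrix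

theorem stmt14_general (n : ℕ) :
    (∀ x : Matrix (Fin n) (Fin 2) ℂ, ∀ y : Matrix (Fin 2) (Fin n) ℂ,
      ∀ p : Matrix (Fin 2) (Fin 2) ℂ,
      Function.Injective x.mulVecLin →
      fderiv ℂ (fun t : Matrix (Fin n) (Fin 2) ℂ × Matrix (Fin 2) (Fin n) ℂ ×
          Matrix (Fin 2) (Fin 2) ℂ => (t.2.2 * t.2.1 * t.1).trace) (x, y, p) = 0 →
      y * x = 0) ∧
    (∀ x : Matrix (Fin n) (Fin 2) ℂ, Function.Injective x.mulVecLin →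
      ∃ φ : (((Fin n → ℂ) ⧸ LinearMap.range x.mulVecLin) →ₗ[ℂ] (Fin 2 → ℂ)) →ₗ[ℂ]
          Matrix (Fin 2) (Fin n) ℂ,
        Function.Injective φ ∧
        ∀ y : Matrix (Fin 2) (Fin n) ℂ, (y * x = 0 ↔ y ∈ Set.range φ)) :=
  ⟨fun _ _ _ _ hcrit => Matrix.mul_eq_zero_of_fderiv_potential_eq_zero hcrit,
    fun x _ => ⟨x.homQuotRangeToMatrix, x.homQuotRangeToMatrix_injective,
      x.mul_eq_zero_iff_mem_range_homQuotRangeToMatrix⟩⟩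

/-- On the total space `E₊` of `Hom(V,S) ⊕ End(S)` over `Gr(2,V)`
(points with chosen basis: `x : S → V` injective, `y : V → S`, `p : End S`), the
function `W = Tr(p ∘ y ∘ x)` has critical locus contained in `{y ∘ x = 0}`; and for
each fixed injective `x`, the fibre `{y : y ∘ x = 0}` of the zero locus is linearly
isomorphic to `Hom(V/S, S)`, the fibre of the cotangent bundle `T*Gr(2,V)`. -/
theorem stmt14 (n : ℕ) (hn : 2 < n) :
    (∀ x : Matrix (Fin n) (Fin 2) ℂ, ∀ y : Matrix (Fin 2) (Fin n) ℂ,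
      ∀ p : Matrix (Fin 2) (Fin 2) ℂ,
      Function.Injective x.mulVecLin →
      fderiv ℂ (fun t : Matrix (Fin n) (Fin 2) ℂ × Matrix (Fin 2) (Fin n) ℂ ×
          Matrix (Fin 2) (Fin 2) ℂ => (t.2.2 * t.2.1 * t.1).trace) (x, y, p) = 0 →
      y * x = 0) ∧
    (∀ x : Matrix (Fin n) (Fin 2) ℂ, Function.Injective x.mulVecLin →
      ∃ φ : (((Fin n → ℂ) ⧸ LinearMap.range x.mulVecLin) →ₗ[ℂ] (Fin 2 → ℂ)) →ₗ[ℂ]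
          Matrix (Fin 2) (Fin n) ℂ,
        Function.Injective φ ∧
        ∀ y : Matrix (Fin 2) (Fin n) ℂ, (y * x = 0 ↔ y ∈ Set.range φ)) :=
  stmt14_general n
end

section
/- Let V be an n-dimensional complex vector space and consider triples (x₁, y₂, a) where x₁: S₁ ↪ V is injective, y₂: V ↠ S₂ is surjective, a: S₂ → S₁, with dim S₁ = dim S₂ = 2. Setting y₁ = a∘y₂ and x₂ = x₁∘a, the resulting map from this space of triples into Hom(S₁,V) ⊕ Hom(V,S₁) ⊕ Hom(S₂,V) ⊕ Hom(V,S₂) modulo the group actions is a closed embedding of the correspondence into F₊ × ℱ; moreover the locus where y₂ is surjective and a is an isomorphism is exactly the graph of the canonical birational identification (the diagonal Δ_F). -/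
noncomputable section

variable (n : ℕ)

/-- Triples `(x₁ : S₁ ↪ V, y₂ : V ↠ S₂, a : S₂ → S₁)` (the correspondence `F̃`),
with `dim S₁ = dim S₂ = 2`, `dim V = n`. -/
abbrev Triple := Matrix (Fin n) (Fin 2) ℂ × Matrix (Fin 2) (Fin n) ℂ ×
  Matrix (Fin 2) (Fin 2) ℂ

/-- Quadruples `(x₁, y₁, x₂, y₂)` representing a point of `F₊ × ℱ`. -/
abbrev Quad := Matrix (Fin n) (Fin 2) ℂ × Matrix (Fin 2) (Fin n) ℂ ×
  Matrix (Fin n) (Fin 2) ℂ × Matrix (Fin 2) (Fin n) ℂ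

/-- The map `(x₁, y₂, a) ↦ (x₁, a∘y₂, x₁∘a, y₂)` into `F₊ × ℱ`. -/
def Phi (t : Triple n) : Quad n := (t.1, t.2.2 * t.2.1, t.1 * t.2.2, t.2.1)

/-- The locus of the correspondence: `x₁` injective and `y₂` surjective. -/
def Dom : Set (Triple n) :=
  {t | Function.Injective t.1.mulVecLin ∧ Function.Surjective t.2.1.mulVecLin}

/-!
Since `x₁` is injective, `a` is recovered from `x₁ * a`, which separates the orbits and shows
that `a` is invertible exactly when `x₁ * a` and `a * y₂` come from one element of `GL₂`. On the
locus where `x₁` is injective and `y₂` surjective, the image of `Phi` is cut out by the closed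
equation `x₁ * y₁ = x₂ * y₂`: given it, `a = y₁ * R` for a right inverse `R` of `y₂` satisfies
`x₂ = x₁ * a`, and cancelling `x₁` gives `y₁ = a * y₂`.
-/

namespace Matrix

section Semiring

variable {α : Type*} [Semiring α] {l m k : Type*} [Fintype m]

theorem mul_left_cancel_of_injective_mulVec {A : Matrix l m α}
    (hA : Function.Injective A.mulVec) {B C : Matrix m k α} (h : A * B = A * C) : B = C := by
  cases isEmpty_or_nonempty k
  · exact Subsingleton.elim B C
  · exact mul_right_injective_iff_mulVec_injective.2 hA h

theorem exists_factor_of_mul_eq_mul [Fintype k] [DecidableEq k] {l' : Type*} [Fintype l']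
    {x₁ : Matrix l m α} {y₁ : Matrix m l' α} {x₂ : Matrix l k α} {y₂ : Matrix k l' α}
    (hx₁ : Function.Injective x₁.mulVec) (hy₂ : ∃ R : Matrix l' k α, y₂ * R = 1)
    (h : x₁ * y₁ = x₂ * y₂) : ∃ a : Matrix m k α, y₁ = a * y₂ ∧ x₂ = x₁ * a := by
  obtain ⟨R, hR⟩ := hy₂
  have hx₂ : x₂ = x₁ * (y₁ * R) := by
    rw [← Matrix.mul_assoc, h, Matrix.mul_assoc, hR, Matrix.mul_one]
  refine ⟨y₁ * R, mul_left_cancel_of_injective_mulVec hx₁ ?_, hx₂⟩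
  rw [← Matrix.mul_assoc, ← hx₂, h]

end Semiring

section CommRing

variable {α : Type*} [CommRing α] {l m k : Type*} [Fintype m] [DecidableEq m]

theorem eq_mul_mul_inv_of_mul_eq {x x' : Matrix l m α} {a a' : Matrix m m α}
    (hx : Function.Injective x.mulVec) (g₁ g₂ : GL m α) (hx' : x' = x * (↑g₁⁻¹ : Matrix m m α))
    (hxa : x' * a' = x * a * (↑g₂⁻¹ : Matrix m m α)) :
    a' = (g₁ : Matrix m m α) * a * (↑g₂⁻¹ : Matrix m m α) := by
  have ha' : (↑g₁⁻¹ : Matrix m m α) * a' = a * (↑g₂⁻¹ : Matrix m m α) := by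
    apply mul_left_cancel_of_injective_mulVec hx
    rw [← Matrix.mul_assoc, ← hx', hxa, Matrix.mul_assoc]
  rw [Matrix.mul_assoc, ← ha', ← Matrix.mul_assoc, ← Units.val_mul, mul_inv_cancel,
    Units.val_one, Matrix.one_mul]

theorem isUnit_iff_exists_GL_mul_eq {x : Matrix l m α} {y : Matrix m k α} {a : Matrix m m α}
    (hx : Function.Injective x.mulVec) :
    (∃ g : GL m α, x * a = x * (g : Matrix m m α) ∧ a * y = (g : Matrix m m α) * y) ↔
      IsUnit a := by
  constructor
  · rintro ⟨g, hxg, -⟩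
    rw [mul_left_cancel_of_injective_mulVec hx hxg]
    exact g.isUnit
  · rintro ⟨g, rfl⟩
    exact ⟨g, rfl, rfl⟩

end CommRing

end Matrix

def incidence : Set (Quad n) := {q | q.1 * q.2.1 = q.2.2.1 * q.2.2.2}

theorem isClosed_incidence : IsClosed (incidence n) :=
  isClosed_eq (continuous_fst.matrix_mul continuous_snd.fst)
    (continuous_snd.snd.fst.matrix_mul continuous_snd.snd.snd)

theorem Phi_mem_incidence (t : Triple n) : Phi n t ∈ incidence n :=
  (Matrix.mul_assoc _ _ _).symm

theorem closure_image_Phi_subset_incidence : closure (Phi n '' Dom n) ⊆ incidence n :=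
  closure_minimal (Set.image_subset_iff.2 fun t _ ↦ Phi_mem_incidence n t) (isClosed_incidence n)

theorem mem_image_Phi_of_mem_incidence {q : Quad n} (hq : q ∈ incidence n)
    (hx₁ : Function.Injective q.1.mulVecLin) (hy₂ : Function.Surjective q.2.2.2.mulVecLin) :
    q ∈ Phi n '' Dom n := by
  obtain ⟨a, hy₁, hx₂⟩ := Matrix.exists_factor_of_mul_eq_mul hx₁
    (Matrix.mulVec_surjective_iff_exists_right_inverse.1 hy₂) hq
  refine ⟨(q.1, q.2.2.2, a), ⟨hx₁, hy₂⟩, ?_⟩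
  rw [Phi, ← hy₁, ← hx₂]

theorem stmt18 :
    -- injectivity on GL(S₁) × GL(S₂)-orbits
    (∀ t ∈ Dom n, ∀ t' ∈ Dom n,
      (∃ g₁ g₂ : Matrix.GeneralLinearGroup (Fin 2) ℂ,
        Phi n t' = ((Phi n t).1 * (↑g₁⁻¹ : Matrix (Fin 2) (Fin 2) ℂ),
          (↑g₁ : Matrix (Fin 2) (Fin 2) ℂ) * (Phi n t).2.1,
          (Phi n t).2.2.1 * (↑g₂⁻¹ : Matrix (Fin 2) (Fin 2) ℂ),
          (↑g₂ : Matrix (Fin 2) (Fin 2) ℂ) * (Phi n t).2.2.2)) →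
      ∃ g₁ g₂ : Matrix.GeneralLinearGroup (Fin 2) ℂ,
        t' = (t.1 * (↑g₁⁻¹ : Matrix (Fin 2) (Fin 2) ℂ),
          (↑g₂ : Matrix (Fin 2) (Fin 2) ℂ) * t.2.1,
          (↑g₁ : Matrix (Fin 2) (Fin 2) ℂ) * t.2.2 *
            (↑g₂⁻¹ : Matrix (Fin 2) (Fin 2) ℂ))) ∧
    -- the image is closed in the locus where x₁ is injective and y₂ is surjective
    (∀ q ∈ closure (Phi n '' Dom n),
      Function.Injective q.1.mulVecLin → Function.Surjective q.2.2.2.mulVecLin →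
      q ∈ Phi n '' Dom n) ∧
    -- the locus where a is invertible is exactly the graph of the birational map
    (∀ t ∈ Dom n,
      ((∃ g : Matrix.GeneralLinearGroup (Fin 2) ℂ,
          (Phi n t).2.2.1 = (Phi n t).1 * (↑g : Matrix (Fin 2) (Fin 2) ℂ) ∧
          (Phi n t).2.1 = (↑g : Matrix (Fin 2) (Fin 2) ℂ) * (Phi n t).2.2.2)
        ↔ IsUnit t.2.2)) := by
  refine ⟨?_, fun q hq ↦ mem_image_Phi_of_mem_incidence n
    (closure_image_Phi_subset_incidence n hq), ?_⟩
  · rintro ⟨x₁, y₂, a⟩ ⟨hx₁, -⟩ ⟨x₁', y₂', a'⟩ - ⟨g₁, g₂, heq⟩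
    simp only [Phi, Prod.mk.injEq] at heq
    obtain ⟨hx₁', -, hxa, hy₂'⟩ := heq
    exact ⟨g₁, g₂, by
      rw [hx₁', hy₂', Matrix.eq_mul_mul_inv_of_mul_eq hx₁ g₁ g₂ hx₁' hxa]⟩
  · rintro ⟨x₁, y₂, a⟩ ⟨hx₁, -⟩
    exact Matrix.isUnit_iff_exists_GL_mul_eq hx₁

end
end
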